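/- arXiv:2402.07481 — 4 statements merged into one kernel-verified Lean document; each statement's English description precedes it below -/
import Mathlib

section
/- For natural numbers n, m ≥ 1, the polynomials C_n and C_m have no common root if and only if gcd(n, m) ∈ {1, 2}. -/
open Polynomial Real

noncomputable def Cpoly (n : ℕ) : Polynomial ℝ :=
  ∏ j ∈ Finset.Icc 1 ((n - 1) / 2),
    (Polynomial.X - Polynomial.C (2 * Real.cos (2 * j * Real.pi / n)))

/-! The roots of `Cpoly n` are the distinct numbers `2 cos (2πj/n)` with `0 < j/n < 1/2`, because
`cos` is injective on `[0, π]`. Hence `Cpoly n` and `Cpoly m` share a root exactly when some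
fraction `j/n = k/m` lies strictly between `0` and `1/2`. Writing `d = gcd n m`, such a fraction
has denominator dividing `n/d`, so `n/d ≤ j < n/2` forces `d ≥ 3`; conversely for `d ≥ 3` the
fraction `1/d = (n/d)/n = (m/d)/m` qualifies. -/

lemma mem_Icc_one_sub_one_div_two_iff {n j : ℕ} :
    j ∈ Finset.Icc 1 ((n - 1) / 2) ↔ 1 ≤ j ∧ 2 * j < n := by
  rw [Finset.mem_Icc]
  omega

lemma Cpoly_eval_eq_zero_iff (n : ℕ) (x : ℝ) :
    (Cpoly n).eval x = 0 ↔ ∃ j : ℕ, (1 ≤ j ∧ 2 * j < n) ∧ x = 2 * cos (2 * j * π / n) := by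
  simp only [Cpoly, eval_prod, Finset.prod_eq_zero_iff, eval_sub, eval_X, eval_C, sub_eq_zero,
    mem_Icc_one_sub_one_div_two_iff]

lemma two_mul_nat_mul_pi_div_mem_Icc {j n : ℕ} (hn : 0 < n) (hj : 2 * j ≤ n) :
    2 * j * π / n ∈ Set.Icc 0 π := by
  have hn' : (0 : ℝ) < n := by exact_mod_cast hn
  have hj' : (2 * j : ℝ) ≤ n := by exact_mod_cast hj
  refine ⟨by positivity, ?_⟩
  rw [div_le_iff₀ hn', mul_comm π]
  exact mul_le_mul_of_nonneg_right hj' pi_pos.le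

lemma cos_two_mul_nat_mul_pi_div_inj {j k n m : ℕ} (hn : 0 < n) (hm : 0 < m)
    (hj : 2 * j ≤ n) (hk : 2 * k ≤ m) :
    cos (2 * j * π / n) = cos (2 * k * π / m) ↔ j * m = k * n := by
  have hn' : (n : ℝ) ≠ 0 := by positivity
  have hm' : (m : ℝ) ≠ 0 := by positivity
  rw [injOn_cos.eq_iff (two_mul_nat_mul_pi_div_mem_Icc hn hj)
    (two_mul_nat_mul_pi_div_mem_Icc hm hk), div_eq_div_iff hn' hm', ← Nat.cast_inj (R := ℝ)]
  push_cast
  have h2pi : 2 * π ≠ 0 := by positivity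
  constructor
  · intro h
    exact mul_left_cancel₀ h2pi (by linear_combination h)
  · intro h
    linear_combination 2 * π * h

lemma common_root_Cpoly_iff {n m : ℕ} (hn : 0 < n) (hm : 0 < m) :
    (∃ x, (Cpoly n).eval x = 0 ∧ (Cpoly m).eval x = 0) ↔
      ∃ j k : ℕ, (1 ≤ j ∧ 2 * j < n) ∧ (1 ≤ k ∧ 2 * k < m) ∧ j * m = k * n := by
  simp only [Cpoly_eval_eq_zero_iff]
  constructor
  · rintro ⟨x, ⟨j, hj, rfl⟩, ⟨k, hk, hx⟩⟩
    refine ⟨j, k, hj, hk, ?_⟩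
    rw [← cos_two_mul_nat_mul_pi_div_inj hn hm hj.2.le hk.2.le]
    linarith
  · rintro ⟨j, k, hj, hk, h⟩
    refine ⟨_, ⟨j, hj, rfl⟩, ⟨k, hk, ?_⟩⟩
    rw [(cos_two_mul_nat_mul_pi_div_inj hn hm hj.2.le hk.2.le).2 h]

lemma three_le_gcd_of_mul_eq_mul {n m j k : ℕ} (hj : 1 ≤ j) (hjn : 2 * j < n)
    (h : j * m = k * n) : 3 ≤ Nat.gcd n m := by
  have hdvd : n ∣ j * Nat.gcd n m := dvd_mul_gcd_iff_dvd_mul.2 ⟨k, by rw [h, mul_comm]⟩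
  have hle : n ≤ j * Nat.gcd n m :=
    Nat.le_of_dvd (Nat.mul_pos hj (Nat.gcd_pos_of_pos_left m (by omega))) hdvd
  by_contra! hlt
  nlinarith

lemma exists_mul_eq_mul_iff_three_le_gcd {n m : ℕ} (hn : 0 < n) (hm : 0 < m) :
    (∃ j k : ℕ, (1 ≤ j ∧ 2 * j < n) ∧ (1 ≤ k ∧ 2 * k < m) ∧ j * m = k * n) ↔
      3 ≤ Nat.gcd n m := by
  constructor
  · rintro ⟨j, k, hj, -, h⟩
    exact three_le_gcd_of_mul_eq_mul hj.1 hj.2 h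
  · intro hd
    have hdn := Nat.gcd_dvd_left n m
    have hdm := Nat.gcd_dvd_right n m
    generalize Nat.gcd n m = d at hd hdn hdm
    obtain ⟨j, rfl⟩ := hdn
    obtain ⟨k, rfl⟩ := hdm
    have hj : 1 ≤ j := Nat.pos_of_mul_pos_left hn
    have hk : 1 ≤ k := Nat.pos_of_mul_pos_left hm
    exact ⟨j, k, ⟨hj, by nlinarith⟩, ⟨hk, by nlinarith⟩, by ring⟩

theorem Cpoly_coprime_iff (n m : ℕ) (hn : 1 ≤ n) (hm : 1 ≤ m) :
    (∀ x : ℝ, ¬((Cpoly n).eval x = 0 ∧ (Cpoly m).eval x = 0)) ↔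
      Nat.gcd n m = 1 ∨ Nat.gcd n m = 2 := by
  rw [← not_exists, common_root_Cpoly_iff hn hm, exists_mul_eq_mul_iff_three_le_gcd hn hm]
  have := Nat.gcd_pos_of_pos_left m hn
  omega
end

section
/- If n ≡ 0 (mod 4), then C_n is an odd function, C_n(0) = 0, and C_n has exactly n/4 − 1 roots in the open interval (−2, 0). -/
open Polynomial Real

theorem Cpoly_odd_function_of_four_dvd (n : ℕ) (hn : 0 < n) (h4 : n % 4 = 0) :
    (∀ x : ℝ, (Cpoly n).eval (-x) = -(Cpoly n).eval x) ∧
    (Cpoly n).eval 0 = 0 ∧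
    Set.ncard {x : ℝ | x ∈ Set.Ioo (-2 : ℝ) 0 ∧ (Cpoly n).eval x = 0} = n / 4 - 1 := by
  obtain ⟨m, rfl⟩ : ∃ m, n = 4 * m := ⟨n / 4, by omega⟩
  have hm : 1 ≤ m := by omega
  have hmR : (0:ℝ) < m := by exact_mod_cast Nat.pos_of_ne_zero (by omega)
  have hpi := Real.pi_pos
  -- angle function
  set f : ℕ → ℝ := fun j => (j:ℝ) * Real.pi / (2*(m:ℝ)) with hf
  set r : ℕ → ℝ := fun j => 2 * Real.cos (f j) with hrdef
  have heval : ∀ x : ℝ, (Cpoly (4*m)).eval x = ∏ j ∈ Finset.Icc 1 (2*m-1), (x - r j) := by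
    intro x
    unfold Cpoly
    rw [show (4*m - 1)/2 = 2*m - 1 from by omega]
    rw [eval_prod]
    apply Finset.prod_congr rfl
    intro j _
    simp only [eval_sub, eval_X, eval_C, hrdef, hf]
    have : 2 * (j:ℝ) * Real.pi / ((4*m : ℕ):ℝ) = (j:ℝ) * Real.pi / (2*(m:ℝ)) := by
      push_cast; field_simp; ring
    rw [this]
  have hfmono : ∀ j k : ℕ, j < k → f j < f k := by
    intro j k hjk
    have : (j:ℝ) < k := by exact_mod_cast hjk
    simp only [hf]
    gcongr
  have hf0 : ∀ j : ℕ, 0 ≤ f j := by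
    intro j; positivity
  have hfle : ∀ j : ℕ, j ≤ m → f j ≤ Real.pi / 2 := by
    intro j hj
    simp only [hf]
    rw [div_le_div_iff₀ (by positivity) (by norm_num)]
    have : (j:ℝ) ≤ m := by exact_mod_cast hj
    nlinarith
  have hfgt : ∀ j : ℕ, m < j → Real.pi / 2 < f j := by
    intro j hj
    simp only [hf]
    rw [div_lt_div_iff₀ (by norm_num) (by positivity)]
    have : (m:ℝ) < j := by exact_mod_cast hj
    nlinarith
  have hfltpi : ∀ j : ℕ, j < 2*m → f j < Real.pi := by
    intro j hj
    simp only [hf]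
    rw [div_lt_iff₀ (by positivity)]
    have : (j:ℝ) < 2*m := by exact_mod_cast hj
    nlinarith
  -- r (2m - j) = - r j for 1 ≤ j ≤ 2m-1
  have hrsym : ∀ j : ℕ, j ∈ Finset.Icc 1 (2*m-1) → r (2*m - j) = - r j := by
    intro j hj
    simp only [Finset.mem_Icc] at hj
    have hcast : ((2*m - j : ℕ):ℝ) = 2*(m:ℝ) - j := by
      push_cast [Nat.cast_sub (by omega : j ≤ 2*m)]; ring
    have : f (2*m - j) = Real.pi - f j := by
      simp only [hf, hcast]
      field_simp
    simp only [hrdef, this, Real.cos_pi_sub]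
    ring
  have hmapsto : ∀ j ∈ Finset.Icc 1 (2*m-1), 2*m - j ∈ Finset.Icc 1 (2*m-1) := by
    intro j hj
    simp only [Finset.mem_Icc] at hj ⊢
    omega
  -- oddness
  have hodd : ∀ x : ℝ, (Cpoly (4*m)).eval (-x) = -(Cpoly (4*m)).eval x := by
    intro x
    rw [heval, heval]
    have h1 : ∀ j ∈ Finset.Icc 1 (2*m-1), (-x - r j) = -(x + r j) := by
      intro j _; ring
    rw [Finset.prod_congr rfl h1]
    have hneg : ∏ j ∈ Finset.Icc 1 (2*m-1), -(x + r j)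
        = (-1:ℝ)^((Finset.Icc 1 (2*m-1)).card) * ∏ j ∈ Finset.Icc 1 (2*m-1), (x + r j) := by
      rw [← Finset.prod_const, ← Finset.prod_mul_distrib]
      exact Finset.prod_congr rfl (fun j _ => by ring)
    rw [hneg, Nat.card_Icc]
    have hcard : 2*m - 1 + 1 - 1 = 2*m - 1 := by omega
    rw [hcard]
    have hoddpow : (-1 : ℝ)^(2*m-1) = -1 := Odd.neg_one_pow ⟨m-1, by omega⟩
    rw [hoddpow]
    have h2 : ∏ j ∈ Finset.Icc 1 (2*m-1), (x + r j) = ∏ j ∈ Finset.Icc 1 (2*m-1), (x - r j) := by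
      apply Finset.prod_nbij' (fun j => 2*m - j) (fun j => 2*m - j)
      · exact hmapsto
      · exact hmapsto
      · intro j hj; simp only [Finset.mem_Icc] at hj; omega
      · intro j hj; simp only [Finset.mem_Icc] at hj; omega
      · intro j hj
        rw [hrsym j hj]
        ring
    rw [h2]
    ring
  refine ⟨hodd, ?_, ?_⟩
  · -- eval 0 = 0
    rw [heval]
    apply Finset.prod_eq_zero (i := m)
    · simp only [Finset.mem_Icc]; omega
    · have : f m = Real.pi / 2 := by
        simp only [hf]; field_simp
      simp [hrdef, this, Real.cos_pi_div_two]
  · -- counting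
    have hkey : {x : ℝ | x ∈ Set.Ioo (-2 : ℝ) 0 ∧ (Cpoly (4*m)).eval x = 0}
        = ↑((Finset.Icc (m+1) (2*m-1)).image r) := by
      ext x
      simp only [Set.mem_setOf_eq, Finset.coe_image, Set.mem_image, Finset.mem_coe,
        Finset.mem_Icc, Set.mem_Ioo]
      constructor
      · rintro ⟨⟨hx2, hx0⟩, hev⟩
        rw [heval] at hev
        obtain ⟨j, hj, hxj⟩ := Finset.prod_eq_zero_iff.mp hev
        simp only [Finset.mem_Icc] at hj
        have hxr : x = r j := by linarith [sub_eq_zero.mp hxj]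
        refine ⟨j, ⟨?_, hj.2⟩, hxr.symm⟩
        by_contra hc
        push_neg at hc
        have hjm : j ≤ m := by omega
        have : 0 ≤ Real.cos (f j) :=
          Real.cos_nonneg_of_mem_Icc ⟨by linarith [hf0 j], hfle j hjm⟩
        have : 0 ≤ r j := by simp only [hrdef]; linarith
        rw [← hxr] at this; linarith
      · rintro ⟨j, ⟨hj1, hj2⟩, hxj⟩
        have hjlt : f j < Real.pi := hfltpi j (by omega)
        have hjgt : Real.pi / 2 < f j := hfgt j (by omega)
        have hcneg : Real.cos (f j) < 0 :=
          Real.cos_neg_of_pi_div_two_lt_of_lt hjgt (by linarith)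
        have hcgt : (-1 : ℝ) < Real.cos (f j) := by
          have := Real.cos_lt_cos_of_nonneg_of_le_pi (hf0 j) le_rfl hjlt
          rwa [Real.cos_pi] at this
        constructor
        constructor
        · rw [← hxj]; simp only [hrdef]; linarith
        · rw [← hxj]; simp only [hrdef]; linarith
        · rw [heval]
          apply Finset.prod_eq_zero (i := j)
          · simp only [Finset.mem_Icc]; omega
          · rw [← hxj]; ring
    rw [hkey, Set.ncard_coe_finset]
    have hinj : Set.InjOn r ↑(Finset.Icc (m+1) (2*m-1)) := by
      intro a ha b hb hab
      simp only [Finset.coe_Icc, Set.mem_Icc] at ha hb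
      by_contra hne
      rcases Nat.lt_or_ge a b with h | h
      · have := Real.cos_lt_cos_of_nonneg_of_le_pi (hf0 a)
          (le_of_lt (hfltpi b (by omega))) (hfmono a b h)
        simp only [hrdef] at hab
        linarith
      · have hba : b < a := by omega
        have := Real.cos_lt_cos_of_nonneg_of_le_pi (hf0 b)
          (le_of_lt (hfltpi a (by omega))) (hfmono b a hba)
        simp only [hrdef] at hab
        linarith
    rw [Finset.card_image_of_injOn hinj, Nat.card_Icc]
    omega
end

section
/- For every natural number k ≥ 1, the number r_{4k} of roots of t_{4k} in the interval (0, 1) is even if and only if k ≡ 0 (mod 3). -/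
open Polynomial Real

noncomputable def t : ℕ → Polynomial ℝ
  | 0 => 2
  | 1 => Polynomial.X
  | (k+2) => Polynomial.X * t (k+1) - t k

noncomputable def r (k : ℕ) : ℕ :=
  Set.ncard {x : ℝ | x ∈ Set.Ioo (0 : ℝ) 1 ∧ (t k).eval x = 0}

/-! Substituting `x = 2 cos θ` with `θ ∈ [0, π]`, we have `x ∈ (0, 1)` iff `θ ∈ (π/3, π/2)`, and
`t_m x = 2 cos (m θ)` vanishes iff `θ = (2j+1)π/(2m)`. Counting the admissible `j` gives
`r_m = ⌊m/2⌋ - ⌊(2m+3)/6⌋`, so `r_{4k} = 2k - ⌊(8k+3)/6⌋`, whose parity depends only on `k mod 3`. -/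

open Set

theorem t_eval_two_mul_cos (θ : ℝ) : ∀ m : ℕ, (t m).eval (2 * cos θ) = 2 * cos (m * θ)
  | 0 => by simp [t]
  | 1 => by simp [t]
  | m + 2 => by
    have h : ((m + 2 : ℕ) : ℝ) * θ = (m + 1 : ℕ) * θ + θ := by push_cast; ring
    have h' : (m : ℝ) * θ = (m + 1 : ℕ) * θ - θ := by push_cast; ring
    rw [t, eval_sub, eval_mul, eval_X, t_eval_two_mul_cos θ (m + 1), t_eval_two_mul_cos θ m,
      h, h', cos_add, cos_sub]
    ring

theorem two_mul_cos_mem_Ioo_zero_one_iff {θ : ℝ} (h₀ : 0 ≤ θ) (hπ : θ ≤ π) :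
    2 * cos θ ∈ Ioo 0 1 ↔ θ ∈ Ioo (π / 3) (π / 2) := by
  have hθ : θ ∈ Icc 0 π := ⟨h₀, hπ⟩
  have h3 : cos θ < cos (π / 3) ↔ π / 3 < θ :=
    strictAntiOn_cos.lt_iff_gt hθ ⟨by positivity, by linarith [pi_pos]⟩
  have h2 : cos (π / 2) < cos θ ↔ θ < π / 2 :=
    strictAntiOn_cos.lt_iff_gt ⟨by positivity, by linarith [pi_pos]⟩ hθ
  rw [cos_pi_div_three] at h3
  rw [cos_pi_div_two] at h2
  simp only [mem_Ioo, ← h3, ← h2]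
  constructor <;> rintro ⟨h₁, h₂⟩ <;> constructor <;> linarith

noncomputable def rootAngle (m : ℕ) (n : ℤ) : ℝ := (2 * n + 1) * π / (2 * m)

theorem cos_mul_eq_zero_iff {m : ℕ} (hm : m ≠ 0) {θ : ℝ} :
    cos (m * θ) = 0 ↔ ∃ n : ℤ, θ = rootAngle m n := by
  have hm' : (m : ℝ) ≠ 0 := by exact_mod_cast hm
  rw [cos_eq_zero_iff]
  refine exists_congr fun n => ?_
  rw [rootAngle]
  constructor <;> intro h
  · field_simp; linarith
  · rw [h]; field_simp

theorem rootAngle_mem_Ioo_iff {m : ℕ} (hm : m ≠ 0) (n : ℤ) :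
    rootAngle m n ∈ Ioo (π / 3) (π / 2) ↔ 2 * (m : ℤ) < 6 * n + 3 ∧ 2 * n + 1 < m := by
  have hm' : (0 : ℝ) < 2 * m := by positivity
  rw [rootAngle, mem_Ioo, lt_div_iff₀ hm', div_lt_iff₀ hm']
  have cancel_pi : ∀ a b : ℤ, (a : ℝ) * π < b * π ↔ a < b := fun a b => by
    rw [mul_lt_mul_iff_of_pos_right pi_pos]; exact_mod_cast Iff.rfl
  have e1 := cancel_pi (2 * m) (6 * n + 3)
  have e2 := cancel_pi (2 * n + 1) m
  push_cast at e1 e2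
  constructor <;> rintro ⟨h₁, h₂⟩
  · exact ⟨e1.1 (by linarith), e2.1 (by linarith)⟩
  · exact ⟨by linarith [e1.2 h₁], by linarith [e2.2 h₂]⟩

theorem rootAngle_injective {m : ℕ} (hm : m ≠ 0) : Function.Injective (rootAngle m) := by
  intro a b h
  have hm' : (m : ℝ) ≠ 0 := by exact_mod_cast hm
  rw [rootAngle, rootAngle, div_left_inj' (by positivity), mul_left_inj' pi_ne_zero] at h
  exact_mod_cast (by linarith : (a : ℝ) = b)

theorem ne_zero_and_rootAngle_mem_Ioo {m j : ℕ} (hj : j ∈ Ico ((2 * m + 3) / 6) (m / 2)) :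
    m ≠ 0 ∧ rootAngle m j ∈ Ioo (π / 3) (π / 2) := by
  rw [mem_Ico] at hj
  have hm : m ≠ 0 := by omega
  exact ⟨hm, (rootAngle_mem_Ioo_iff hm j).2 (by omega)⟩

theorem rootSet_eq_image (m : ℕ) :
    {x : ℝ | x ∈ Ioo 0 1 ∧ (t m).eval x = 0} =
      (fun j : ℕ => 2 * cos (rootAngle m j)) '' Ico ((2 * m + 3) / 6) (m / 2) := by
  ext x
  constructor
  · rintro ⟨hx, hroot⟩
    obtain ⟨θ, hθ₀, hθπ, rfl⟩ : ∃ θ, 0 ≤ θ ∧ θ ≤ π ∧ 2 * cos θ = x :=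
      ⟨arccos (x / 2), arccos_nonneg _, arccos_le_pi _, by
        rw [cos_arccos] <;> linarith [hx.1, hx.2]⟩
    have hθ := (two_mul_cos_mem_Ioo_zero_one_iff hθ₀ hθπ).1 hx
    rw [t_eval_two_mul_cos] at hroot
    have hcos : cos (m * θ) = 0 := by linarith
    have hm : m ≠ 0 := by rintro rfl; simp at hcos
    obtain ⟨n, rfl⟩ := (cos_mul_eq_zero_iff hm).1 hcos
    obtain ⟨h₁, h₂⟩ := (rootAngle_mem_Ioo_iff hm n).1 hθ
    lift n to ℕ using by omega
    exact ⟨n, mem_Ico.2 (by omega), rfl⟩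
  · rintro ⟨j, hj, rfl⟩
    obtain ⟨hm, hθ⟩ := ne_zero_and_rootAngle_mem_Ioo hj
    refine ⟨(two_mul_cos_mem_Ioo_zero_one_iff ?_ ?_).2 hθ, ?_⟩
    · linarith [hθ.1, pi_pos]
    · linarith [hθ.2, pi_pos]
    · rw [t_eval_two_mul_cos, (cos_mul_eq_zero_iff hm).2 ⟨j, rfl⟩, mul_zero]

theorem r_eq_div_two_sub_div_six (m : ℕ) : r m = m / 2 - (2 * m + 3) / 6 := by
  have hIcc : Ioo (π / 3) (π / 2) ⊆ Icc 0 π :=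
    Ioo_subset_Icc_self.trans (Icc_subset_Icc (by positivity) (by linarith [pi_pos]))
  have hinj : InjOn (fun j : ℕ => 2 * cos (rootAngle m j)) (Ico ((2 * m + 3) / 6) (m / 2)) := by
    intro i hi j hj hij
    obtain ⟨hm, hθi⟩ := ne_zero_and_rootAngle_mem_Ioo hi
    obtain ⟨-, hθj⟩ := ne_zero_and_rootAngle_mem_Ioo hj
    exact_mod_cast rootAngle_injective hm
      (injOn_cos (hIcc hθi) (hIcc hθj) (mul_left_cancel₀ two_ne_zero hij))
  rw [r, rootSet_eq_image, hinj.ncard_image, ncard_Ico_nat]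

theorem r_four_mul_even_iff_general (k : ℕ) :
    Even (r (4 * k)) ↔ k % 3 = 0 := by
  rw [r_eq_div_two_sub_div_six, Nat.even_iff]
  omega

theorem r_four_mul_even_iff (k : ℕ) (hk : 1 ≤ k) :
    Even (r (4 * k)) ↔ k % 3 = 0 :=
  r_four_mul_even_iff_general k
end

section
/- For natural numbers n ≥ 5 with n not divisible by 5 and n ≡ 0 (mod 4), the polynomials C_n(x) and C_5(−x) have no common root. -/
open Polynomial Real

theorem Cpoly_C5_neg_no_common_root (n : ℕ) (hn : 5 ≤ n) (h4 : n % 4 = 0)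
    (h5 : ¬ (5 ∣ n)) :
    ((∃ x : ℝ, (Cpoly n).eval x = 0 ∧ (Cpoly 5).eval (-x) = 0) ↔ 5 ∣ n) ∧
    ¬ ∃ x : ℝ, (Cpoly n).eval x = 0 ∧ (Cpoly 5).eval (-x) = 0 := by
  have hn0 : (0:ℝ) < n := by positivity
  have key : ¬ ∃ x : ℝ, (Cpoly n).eval x = 0 ∧ (Cpoly 5).eval (-x) = 0 := by
    rintro ⟨x, hx, hy⟩
    simp only [Cpoly, Polynomial.eval_prod, Finset.prod_eq_zero_iff,
      Polynomial.eval_sub, Polynomial.eval_X, Polynomial.eval_C, sub_eq_zero] at hx hy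
    obtain ⟨j, hj, hxj⟩ := hx
    obtain ⟨k, hk, hxk⟩ := hy
    rw [Finset.mem_Icc] at hj hk
    norm_num at hk
    have h2j : 2 * j ≤ n - 1 := by omega
    have h2jn : (2 * j : ℝ) ≤ n := by exact_mod_cast (by omega : 2 * j ≤ n)
    have hj1 : (1:ℝ) ≤ j := by exact_mod_cast hj.1
    have hk1 : (1:ℝ) ≤ k := by exact_mod_cast hk.1
    have hk2 : (k:ℝ) ≤ 2 := by exact_mod_cast hk.2
    have hpi := Real.pi_pos
    have hcos : Real.cos (2 * j * Real.pi / n) = Real.cos (Real.pi - 2 * k * Real.pi / 5) := by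
      rw [Real.cos_pi_sub]
      nlinarith [hxj, hxk]
    have hmem1 : 2 * (j:ℝ) * Real.pi / n ∈ Set.Icc 0 Real.pi := by
      constructor
      · positivity
      · rw [div_le_iff₀ hn0]; nlinarith
    have hmem2 : Real.pi - 2 * (k:ℝ) * Real.pi / 5 ∈ Set.Icc 0 Real.pi := by
      constructor
      · nlinarith
      · nlinarith
    have heq := Real.injOn_cos hmem1 hmem2 hcos
    have hne : (n:ℝ) ≠ 0 := ne_of_gt hn0
    have hnat : 10 * j + 2 * k * n = 5 * n := by
      have h10 : (10 * j : ℝ) + 2 * k * n = 5 * n := by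
        field_simp at heq
        nlinarith [heq]
      exact_mod_cast h10
    have : k = 1 ∨ k = 2 := by omega
    rcases this with rfl | rfl <;> omega
  refine ⟨⟨fun h => absurd h key, fun h => absurd h h5⟩, key⟩
end
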